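/- There exists a constant C > 0 with the following property. Let ρ > 0, 0 < δ ≤ 1 with δ < ρ, and a, b ≥ 0. Let A, B : ℤ × ℤ → ℂ satisfy: |A(i,j)| ≤ a e^{−ρ|i−j|} for all i, j; for every (i,j) there is a complex number A^∞(i,j) such that |A(i+t, j+t) − A^∞(i,j)| ≤ (a/t) e^{−ρ|i−j|} for every integer t ≥ 1; and the analogous conditions for B with constant b and limits B^∞. Then for every (i,j): (1) the series P(i,j) := ∑_{k∈ℤ} A(i,k) B(k,j) and P^∞(i,j) := ∑_{k∈ℤ} A^∞(i,k) B^∞(k,j) converge absolutely; (2) P(i+t, j+t) → P^∞(i,j) as t → ∞; and (3) |P(i+t, j+t) − P^∞(i,j)| ≤ C δ^{−1} a b t^{−1} e^{−(ρ−δ)|i−j|} for every integer t ≥ 1. -/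

import Mathlib

/-!
Reindexing `k = m + t`, the difference of the two products becomes
`∑ₘ (A(i+t, m+t) B(m+t, j+t) - A^∞(i,m) B^∞(m,j))`. Splitting each term as
`(A - A^∞) B + A^∞ (B - B^∞)`, and using that `A^∞` inherits the decay of `A` with constant `2a`,
each term is at most `3ab/t · e^{-ρ|i-m|} e^{-ρ|m-j|}`. Giving up `δ` of the decay rate, the
triangle inequality gives `e^{-ρ|i-m|} e^{-ρ|m-j|} ≤ e^{-(ρ-δ)|i-j|} e^{-δ|i-m|}`, and the
geometric series `∑ₘ e^{-δ|i-m|} = (1 + e^{-δ})/(1 - e^{-δ})` is at most `(2 + δ)/δ ≤ 3/δ`,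
using `e^δ ≥ 1 + δ`. Hence `C = 9` works.
-/

open Real Filter

noncomputable def decay (ρ : ℝ) (i j : ℤ) : ℝ := exp (-ρ * |(i : ℝ) - j|)

theorem decay_pos (ρ : ℝ) (i j : ℤ) : 0 < decay ρ i j := exp_pos _

theorem decay_add_add (ρ : ℝ) (i j t : ℤ) : decay ρ (i + t) (j + t) = decay ρ i j := by
  simp only [decay, Int.cast_add, add_sub_add_right_eq_sub]

theorem decay_zero (i j : ℤ) : decay 0 i j = 1 := by simp [decay]

theorem decay_mul_decay_le {ρ δ : ℝ} (hδ : 0 ≤ δ) (hδρ : δ ≤ ρ) (i j k : ℤ) :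
    decay ρ i k * decay ρ k j ≤ decay (ρ - δ) i j * decay δ i k := by
  simp only [decay, ← exp_add, exp_le_exp]
  have htri : |(i : ℝ) - j| ≤ |(i : ℝ) - k| + |(k : ℝ) - j| := abs_sub_le _ _ _
  nlinarith [abs_nonneg ((k : ℝ) - j), mul_le_mul_of_nonneg_left htri (sub_nonneg.mpr hδρ)]

theorem hasSum_exp_neg_mul_abs_int {δ : ℝ} (hδ : 0 < δ) :
    HasSum (fun n : ℤ => exp (-δ * |(n : ℝ)|)) (2 * (1 - exp (-δ))⁻¹ - 1) := by
  have hgeom : HasSum (fun n : ℕ => exp (-δ) ^ n) (1 - exp (-δ))⁻¹ :=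
    hasSum_geometric_of_lt_one (exp_pos _).le (exp_lt_one_iff.mpr (by linarith))
  have hnat : ∀ n : ℕ, exp (-δ * |((n : ℤ) : ℝ)|) = exp (-δ) ^ n := fun n => by
    rw [← exp_nat_mul]; simp [mul_comm]
  have hneg : ∀ n : ℕ, exp (-δ * |((-n : ℤ) : ℝ)|) = exp (-δ) ^ n := fun n => by
    rw [← exp_nat_mul]; simp [mul_comm]
  have h := HasSum.of_nat_of_neg (f := fun n : ℤ => exp (-δ * |(n : ℝ)|))
    (by simpa only [hnat] using hgeom) (by simpa only [hneg] using hgeom)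
  rwa [Int.cast_zero, abs_zero, mul_zero, exp_zero, ← two_mul] at h

theorem hasSum_decay {δ : ℝ} (hδ : 0 < δ) (i : ℤ) :
    HasSum (fun k => decay δ i k) (2 * (1 - exp (-δ))⁻¹ - 1) := by
  convert (Equiv.subLeft i).hasSum_iff.mpr (hasSum_exp_neg_mul_abs_int hδ) with k
  simp [decay]

theorem two_mul_inv_one_sub_exp_neg_sub_one_le {δ : ℝ} (hδ : 0 < δ) :
    2 * (1 - exp (-δ))⁻¹ - 1 ≤ (2 + δ) / δ := by
  have hexp : exp (-δ) * (1 + δ) ≤ 1 := by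
    calc exp (-δ) * (1 + δ) ≤ exp (-δ) * exp δ := by gcongr; linarith [add_one_le_exp δ]
      _ = 1 := by rw [← exp_add]; simp
  have hlow : δ / (1 + δ) ≤ 1 - exp (-δ) := by
    rw [div_le_iff₀ (by linarith)]; linarith
  have hinv : (1 - exp (-δ))⁻¹ ≤ (1 + δ) / δ := by
    rw [← inv_div]; exact inv_anti₀ (by positivity) hlow
  calc 2 * (1 - exp (-δ))⁻¹ - 1 ≤ 2 * ((1 + δ) / δ) - 1 := by linarith
    _ = (2 + δ) / δ := by field_simp; ring

theorem summable_decay_mul_decay {ρ : ℝ} (hρ : 0 < ρ) (i j : ℤ) :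
    Summable fun k => decay ρ i k * decay ρ k j :=
  Summable.of_nonneg_of_le (fun k => (mul_pos (decay_pos ρ i k) (decay_pos ρ k j)).le)
    (fun k => by simpa [decay_zero] using decay_mul_decay_le hρ.le le_rfl i j k)
    (hasSum_decay hρ i).summable

theorem tsum_decay_mul_decay_le {ρ δ : ℝ} (hδ : 0 < δ) (hδρ : δ ≤ ρ) (i j : ℤ) :
    ∑' k, decay ρ i k * decay ρ k j ≤ (2 + δ) / δ * decay (ρ - δ) i j := by
  calc ∑' k, decay ρ i k * decay ρ k j ≤ ∑' k, decay (ρ - δ) i j * decay δ i k :=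
        (summable_decay_mul_decay (hδ.trans_le hδρ) i j).tsum_le_tsum
          (decay_mul_decay_le hδ.le hδρ i j) ((hasSum_decay hδ i).summable.mul_left _)
    _ = decay (ρ - δ) i j * (2 * (1 - exp (-δ))⁻¹ - 1) := by
        rw [tsum_mul_left, (hasSum_decay hδ i).tsum_eq]
    _ ≤ decay (ρ - δ) i j * ((2 + δ) / δ) :=
        mul_le_mul_of_nonneg_left (two_mul_inv_one_sub_exp_neg_sub_one_le hδ)
          (decay_pos _ i j).le
    _ = (2 + δ) / δ * decay (ρ - δ) i j := mul_comm _ _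

theorem norm_mul_sub_mul_le {R : Type*} [NormedRing R] (x y x' y' : R) :
    ‖x * y - x' * y'‖ ≤ ‖x - x'‖ * ‖y‖ + ‖x'‖ * ‖y - y'‖ :=
  calc ‖x * y - x' * y'‖ = ‖(x - x') * y + x' * (y - y')‖ := by noncomm_ring
    _ ≤ ‖(x - x') * y‖ + ‖x' * (y - y')‖ := norm_add_le _ _
    _ ≤ ‖x - x'‖ * ‖y‖ + ‖x'‖ * ‖y - y'‖ := add_le_add (norm_mul_le _ _) (norm_mul_le _ _)

theorem tendsto_of_norm_sub_le_div {E : Type*} [SeminormedAddCommGroup E] {u : ℕ → E} {l : E}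
    {c d : ℝ} (h : ∀ t : ℕ, 1 ≤ t → ‖u t - l‖ ≤ c / t * d) : Tendsto u atTop (nhds l) := by
  rw [tendsto_iff_norm_sub_tendsto_zero]
  refine squeeze_zero' (Eventually.of_forall fun t => norm_nonneg _) ?_
    (tendsto_const_div_atTop_nhds_zero_nat (c * d))
  filter_upwards [eventually_ge_atTop 1] with t ht
  exact (h t ht).trans_eq (by ring)

section DecayingMatrix

variable {R : Type*} [NormedRing R] {ρ a b : ℝ} {A B Ainf Binf : ℤ → ℤ → R}

def HasDecay (ρ a : ℝ) (A : ℤ → ℤ → R) : Prop :=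
  ∀ i j, ‖A i j‖ ≤ a * decay ρ i j

def IsAsymptoticallyToeplitz (ρ a : ℝ) (A Ainf : ℤ → ℤ → R) : Prop :=
  ∀ i j : ℤ, ∀ t : ℕ, 1 ≤ t → ‖A (i + t) (j + t) - Ainf i j‖ ≤ a / t * decay ρ i j

theorem HasDecay.shift (hA : HasDecay ρ a A) (t : ℤ) :
    HasDecay ρ a fun i j => A (i + t) (j + t) :=
  fun i j => decay_add_add ρ i j t ▸ hA (i + t) (j + t)

theorem HasDecay.of_isAsymptoticallyToeplitz (hA : HasDecay ρ a A)
    (hA' : IsAsymptoticallyToeplitz ρ a A Ainf) : HasDecay ρ (2 * a) Ainf := fun i j => by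
  have hlim := hA' i j 1 le_rfl
  simp only [Nat.cast_one, div_one] at hlim
  calc ‖Ainf i j‖ ≤ ‖A (i + 1) (j + 1)‖ + ‖A (i + 1) (j + 1) - Ainf i j‖ := norm_le_insert _ _
    _ ≤ 2 * a * decay ρ i j := by linarith [hA.shift 1 i j]

theorem HasDecay.norm_mul_le (hA : HasDecay ρ a A) (hB : HasDecay ρ b B) (i j k : ℤ) :
    ‖A i k * B k j‖ ≤ a * b * (decay ρ i k * decay ρ k j) :=
  calc ‖A i k * B k j‖ ≤ ‖A i k‖ * ‖B k j‖ := _root_.norm_mul_le _ _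
    _ ≤ (a * decay ρ i k) * (b * decay ρ k j) :=
        mul_le_mul (hA i k) (hB k j) (norm_nonneg _) ((norm_nonneg _).trans (hA i k))
    _ = a * b * (decay ρ i k * decay ρ k j) := by ring

theorem HasDecay.summable_norm_mul (hA : HasDecay ρ a A) (hB : HasDecay ρ b B) (hρ : 0 < ρ)
    (i j : ℤ) : Summable fun k => ‖A i k * B k j‖ :=
  Summable.of_nonneg_of_le (fun _ => norm_nonneg _) (hA.norm_mul_le hB i j)
    ((summable_decay_mul_decay hρ i j).mul_left _)

theorem norm_shift_mul_sub_mul_le (hA : HasDecay ρ a A) (hA' : IsAsymptoticallyToeplitz ρ a A Ainf)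
    (hB : HasDecay ρ b B) (hB' : IsAsymptoticallyToeplitz ρ b B Binf) (i j m : ℤ) {t : ℕ}
    (ht : 1 ≤ t) :
    ‖A (i + t) (m + t) * B (m + t) (j + t) - Ainf i m * Binf m j‖ ≤
      3 * a * b / t * (decay ρ i m * decay ρ m j) := by
  have hAinf := hA.of_isAsymptoticallyToeplitz hA'
  calc _ ≤ ‖A (i + t) (m + t) - Ainf i m‖ * ‖B (m + t) (j + t)‖ +
          ‖Ainf i m‖ * ‖B (m + t) (j + t) - Binf m j‖ := norm_mul_sub_mul_le _ _ _ _
    _ ≤ (a / t * decay ρ i m) * (b * decay ρ m j) +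
          (2 * a * decay ρ i m) * (b / t * decay ρ m j) :=
        add_le_add
          (mul_le_mul (hA' i m t ht) (hB.shift t m j) (norm_nonneg _)
            ((norm_nonneg _).trans (hA' i m t ht)))
          (mul_le_mul (hAinf i m) (hB' m j t ht) (norm_nonneg _)
            ((norm_nonneg _).trans (hAinf i m)))
    _ = 3 * a * b / t * (decay ρ i m * decay ρ m j) := by ring

theorem norm_tsum_shift_sub_tsum_le [CompleteSpace R] {δ : ℝ} (hδ : 0 < δ) (hδρ : δ ≤ ρ)
    (ha : 0 ≤ a) (hb : 0 ≤ b) (hA : HasDecay ρ a A) (hA' : IsAsymptoticallyToeplitz ρ a A Ainf)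
    (hB : HasDecay ρ b B) (hB' : IsAsymptoticallyToeplitz ρ b B Binf) (i j : ℤ) {t : ℕ}
    (ht : 1 ≤ t) :
    ‖(∑' k, A (i + t) k * B k (j + t)) - ∑' k, Ainf i k * Binf k j‖ ≤
      3 * a * b / t * ((2 + δ) / δ * decay (ρ - δ) i j) := by
  have hρ : 0 < ρ := hδ.trans_le hδρ
  have hshift : ∑' k, A (i + t) k * B k (j + t) =
      ∑' m, A (i + t) (m + t) * B (m + t) (j + t) :=
    ((Equiv.addRight (t : ℤ)).tsum_eq _).symm
  have hS := ((hA.shift t).summable_norm_mul (hB.shift t) hρ i j).of_norm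
  have hSinf := ((hA.of_isAsymptoticallyToeplitz hA').summable_norm_mul
    (hB.of_isAsymptoticallyToeplitz hB') hρ i j).of_norm
  rw [hshift, ← hS.tsum_sub hSinf]
  calc _ ≤ ∑' m, 3 * a * b / t * (decay ρ i m * decay ρ m j) :=
        tsum_of_norm_bounded ((summable_decay_mul_decay hρ i j).mul_left _).hasSum
          fun m => norm_shift_mul_sub_mul_le hA hA' hB hB' i j m ht
    _ = 3 * a * b / t * ∑' m, decay ρ i m * decay ρ m j := tsum_mul_left
    _ ≤ _ := mul_le_mul_of_nonneg_left (tsum_decay_mul_decay_le hδ hδρ i j) (by positivity)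

end DecayingMatrix

/-- Asymptotically Töplitz / Lipschitz-at-infinity property of matrix products:
if `A, B : ℤ × ℤ → ℂ` have exponential off-diagonal decay of rate `ρ` with constants
`a, b`, and possess diagonal-shift limits `A^∞, B^∞` with Lipschitz rate `a/t`, `b/t`,
then the product `P(i,j) = ∑_{k} A(i,k) B(k,j)` converges absolutely, the shifted products
`P(i+t, j+t)` converge to `P^∞(i,j) = ∑_k A^∞(i,k) B^∞(k,j)`, with the quantitative bound
`|P(i+t,j+t) - P^∞(i,j)| ≤ C δ⁻¹ a b t⁻¹ e^{-(ρ-δ)|i-j|}`. -/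
theorem toplitz_lipschitz_product :
    ∃ C : ℝ, 0 < C ∧
      ∀ (ρ δ a b : ℝ), 0 < δ → δ ≤ 1 → δ < ρ → 0 ≤ a → 0 ≤ b →
      ∀ (A B Ainf Binf : ℤ → ℤ → ℂ),
      (∀ i j : ℤ, ‖A i j‖ ≤ a * Real.exp (-ρ * |(i : ℝ) - (j : ℝ)|)) →
      (∀ i j : ℤ, ∀ t : ℕ, 1 ≤ t →
        ‖A (i + t) (j + t) - Ainf i j‖ ≤ a / t * Real.exp (-ρ * |(i : ℝ) - (j : ℝ)|)) →
      (∀ i j : ℤ, ‖B i j‖ ≤ b * Real.exp (-ρ * |(i : ℝ) - (j : ℝ)|)) →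
      (∀ i j : ℤ, ∀ t : ℕ, 1 ≤ t →
        ‖B (i + t) (j + t) - Binf i j‖ ≤ b / t * Real.exp (-ρ * |(i : ℝ) - (j : ℝ)|)) →
      ∀ i j : ℤ,
        (∀ i' j' : ℤ, Summable (fun k : ℤ => ‖A i' k * B k j'‖)) ∧
        Summable (fun k : ℤ => ‖Ainf i k * Binf k j‖) ∧
        Tendsto (fun t : ℕ => ∑' k : ℤ, A (i + t) k * B k (j + t)) atTop
          (nhds (∑' k : ℤ, Ainf i k * Binf k j)) ∧
        (∀ t : ℕ, 1 ≤ t →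
          ‖(∑' k : ℤ, A (i + t) k * B k (j + t)) - ∑' k : ℤ, Ainf i k * Binf k j‖ ≤
            C * δ⁻¹ * a * b / t * Real.exp (-(ρ - δ) * |(i : ℝ) - (j : ℝ)|)) := by
  refine ⟨9, by norm_num, ?_⟩
  intro ρ δ a b hδ hδ1 hδρ ha hb A B Ainf Binf hA hA' hB hB' i j
  have hρ : 0 < ρ := hδ.trans hδρ
  have hAinf := HasDecay.of_isAsymptoticallyToeplitz hA hA'
  have hBinf := HasDecay.of_isAsymptoticallyToeplitz hB hB'
  have hδ3 : (2 + δ) / δ ≤ 3 * δ⁻¹ := by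
    rw [div_le_iff₀ hδ, mul_assoc, inv_mul_cancel₀ hδ.ne']
    linarith
  have hbound : ∀ t : ℕ, 1 ≤ t →
      ‖(∑' k, A (i + t) k * B k (j + t)) - ∑' k, Ainf i k * Binf k j‖ ≤
        9 * δ⁻¹ * a * b / t * decay (ρ - δ) i j := fun t ht =>
    calc _ ≤ 3 * a * b / t * ((2 + δ) / δ * decay (ρ - δ) i j) :=
          norm_tsum_shift_sub_tsum_le hδ hδρ.le ha hb hA hA' hB hB' i j ht
      _ ≤ 3 * a * b / t * (3 * δ⁻¹ * decay (ρ - δ) i j) := by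
          gcongr
          exact (decay_pos _ i j).le
      _ = 9 * δ⁻¹ * a * b / t * decay (ρ - δ) i j := by ring
  exact ⟨HasDecay.summable_norm_mul hA hB hρ, hAinf.summable_norm_mul hBinf hρ i j,
    tendsto_of_norm_sub_le_div hbound, hbound⟩
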